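/- For all t > 0, ∫_ℝ |H₁(x,t)| dx ≤ e^{−at} + √ε · π t · e^{−lt}, where l = min(a, βε). -/

import Mathlib

open Real MeasureTheory Set

noncomputable def J1 (z : ℝ) : ℝ :=
  ∑' k : ℕ, ((-1 : ℝ)^k / ((k.factorial : ℝ) * ((k+1).factorial : ℝ))) * (z/2)^(2*k+1)

noncomputable def J0 (z : ℝ) : ℝ :=
  ∑' k : ℕ, ((-1 : ℝ)^k / ((k.factorial : ℝ))^2) * (z/2)^(2*k)

noncomputable def I0 (z : ℝ) : ℝ :=
  ∑' k : ℕ, (z/2)^(2*k) / ((k.factorial : ℝ))^2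

noncomputable def I1 (z : ℝ) : ℝ :=
  ∑' k : ℕ, (1 / ((k.factorial : ℝ) * ((k+1).factorial : ℝ))) * (z/2)^(2*k+1)

noncomputable def H1 (D a ε β : ℝ) (x t : ℝ) : ℝ :=
  Real.exp (-x^2/(4*D*t)) / (2 * Real.sqrt (π*D*t)) * Real.exp (-a*t)
  - (1/2) * ∫ y in (0:ℝ)..t,
      (Real.exp (-x^2/(4*D*y) - a*y) / Real.sqrt (t-y)) *
      (Real.sqrt ε * Real.exp (-β*ε*(t-y)) / Real.sqrt (π*D)) *
      J1 (2 * Real.sqrt (ε*y*(t-y)))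

noncomputable def H2 (D a ε β δ d : ℝ) (x t : ℝ) : ℝ :=
  ∫ y in (0:ℝ)..t, H1 D a ε β x y * Real.exp (-δ*d*(t-y)) *
    Real.sqrt (δ*y/(t-y)) * J1 (2 * Real.sqrt (δ*y*(t-y)))

noncomputable def Hker (D a ε β δ d : ℝ) (x t : ℝ) : ℝ :=
  H1 D a ε β x t - H2 D a ε β δ d x t

noncomputable def Kdelta (D a ε β δ d : ℝ) (x t : ℝ) : ℝ :=
  ∫ y in (0:ℝ)..t, Real.exp (-δ*d*(t-y)) * H1 D a ε β x y *
    J0 (2 * Real.sqrt (δ*y*(t-y)))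

noncomputable def Hdelta (D a ε β δ d : ℝ) (x t : ℝ) : ℝ :=
  ∫ τ in (0:ℝ)..t, Real.exp (-β*ε*(t-τ)) * Kdelta D a ε β δ d x τ

lemma wallis_prod (n : ℕ) : ∏ i ∈ Finset.range n, ((2*(i:ℝ)+1)/(2*i+2)) =
    ((2*n).factorial : ℝ) / (4^n * ((n.factorial:ℝ))^2) := by
  induction n with
  | zero => simp
  | succ n ih =>
    rw [Finset.prod_range_succ, ih]
    have h1 : (2*(n+1)) = (2*n+1) + 1 := by ring
    rw [h1, Nat.factorial_succ, Nat.factorial_succ, Nat.factorial_succ]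
    push_cast
    have h2 : ((2*n).factorial : ℝ) ≠ 0 := Nat.cast_ne_zero.2 (Nat.factorial_ne_zero _)
    have h3 : ((n).factorial : ℝ) ≠ 0 := Nat.cast_ne_zero.2 (Nat.factorial_ne_zero _)
    have h4 : (4:ℝ)^n ≠ 0 := by positivity
    field_simp
    ring

lemma J1_rep (z : ℝ) :
    J1 z = (1/π) * ∫ θ in (0:ℝ)..π, Real.sin (z * Real.sin θ) * Real.sin θ := by
  set F : ℕ → ℝ → ℝ := fun k θ =>
    ((-1:ℝ)^k * z^(2*k+1) / ((2*k+1).factorial : ℝ)) * (Real.sin θ)^(2*(k+1)) with hF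
  set μ : Measure ℝ := volume.restrict (Set.Ioc (0:ℝ) π) with hμ
  have htsum : ∀ θ : ℝ, ∑' k, F k θ = Real.sin (z * Real.sin θ) * Real.sin θ := by
    intro θ
    have h := (Real.hasSum_sin (z * Real.sin θ)).mul_right (Real.sin θ)
    have h2 : (fun n : ℕ => (-1:ℝ)^n * (z * Real.sin θ)^(2*n+1) / ((2*n+1).factorial : ℝ)
        * Real.sin θ) = fun k => F k θ := by
      funext k
      simp only [hF]
      rw [mul_pow]
      ring_nf
    rw [h2] at h
    exact h.tsum_eq
  have hint : ∀ k, Integrable (F k) μ := by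
    intro k
    exact (Continuous.integrableOn_Ioc (by continuity))
  have hsum : Summable fun k => ∫ θ, ‖F k θ‖ ∂μ := by
    have hbig : Summable (fun k : ℕ => |z|^(2*k+1) / ((2*k+1).factorial : ℝ) * π) := by
      have h1 : Summable (fun n : ℕ => |z|^n / (n.factorial : ℝ) * π) :=
        (Real.summable_pow_div_factorial |z|).mul_right π
      exact h1.comp_injective (fun a b hab => by omega)
    refine Summable.of_nonneg_of_le (fun k => integral_nonneg (fun θ => norm_nonneg _))
      (fun k => ?_) hbig
    have hb : ∀ θ : ℝ, ‖F k θ‖ ≤ |z|^(2*k+1) / ((2*k+1).factorial : ℝ) := by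
      intro θ
      simp only [hF, norm_mul, Real.norm_eq_abs]
      rw [abs_div, abs_mul, abs_pow, abs_pow, abs_neg, abs_one, one_pow, one_mul,
        Nat.abs_cast, abs_pow]
      calc |z|^(2*k+1) / ((2*k+1).factorial : ℝ) * |Real.sin θ|^(2*(k+1))
          ≤ |z|^(2*k+1) / ((2*k+1).factorial : ℝ) * 1 := by
            apply mul_le_mul_of_nonneg_left
            · exact pow_le_one₀ (abs_nonneg _) (Real.abs_sin_le_one θ)
            · positivity
        _ = _ := mul_one _
    calc ∫ θ, ‖F k θ‖ ∂μ ≤ ∫ _θ, |z|^(2*k+1) / ((2*k+1).factorial : ℝ) ∂μ := by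
          apply integral_mono (hint k).norm (integrable_const _) (fun θ => hb θ)
      _ = |z|^(2*k+1) / ((2*k+1).factorial : ℝ) * π := by
          rw [integral_const, hμ, measureReal_def, Measure.restrict_apply_univ, Real.volume_Ioc,
            sub_zero, ENNReal.toReal_ofReal Real.pi_pos.le, smul_eq_mul, mul_comm]
  have key := hasSum_integral_of_summable_integral_norm hint hsum
  have hIcongr : (∫ θ, (∑' k, F k θ) ∂μ) = ∫ θ in (0:ℝ)..π, Real.sin (z * Real.sin θ) * Real.sin θ := by
    rw [intervalIntegral.integral_of_le Real.pi_pos.le]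
    exact integral_congr_ae (Filter.Eventually.of_forall (fun θ => htsum θ))
  rw [hIcongr] at key
  have hterm : ∀ k : ℕ, (∫ θ, F k θ ∂μ) =
      π * ((-1:ℝ)^k / ((k.factorial : ℝ) * ((k+1).factorial : ℝ)) * (z/2)^(2*k+1)) := by
    intro k
    have h1 : (∫ θ, F k θ ∂μ) = ((-1:ℝ)^k * z^(2*k+1) / ((2*k+1).factorial : ℝ)) *
        ∫ θ in (0:ℝ)..π, (Real.sin θ)^(2*(k+1)) := by
      rw [show (∫ θ, F k θ ∂μ) = ∫ θ in (0:ℝ)..π, F k θ from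
        (intervalIntegral.integral_of_le Real.pi_pos.le).symm,
        ← intervalIntegral.integral_const_mul]
    rw [h1, integral_sin_pow_even, wallis_prod]
    have h2 : ((2*k+1).factorial : ℝ) ≠ 0 := Nat.cast_ne_zero.2 (Nat.factorial_ne_zero _)
    have h3 : ((k.factorial : ℝ)) ≠ 0 := Nat.cast_ne_zero.2 (Nat.factorial_ne_zero _)
    have h4 : (((k+1).factorial : ℝ)) ≠ 0 := Nat.cast_ne_zero.2 (Nat.factorial_ne_zero _)
    have h5 : (2*(k+1)) = (2*k+1)+1 := by ring
    have h6 : ((2*(k+1)).factorial : ℝ) = (2*k+1+1) * ((2*k+1).factorial : ℝ) := by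
      rw [h5, Nat.factorial_succ]; push_cast; ring
    have h7 : (((k+1).factorial : ℝ)) = (k+1) * (k.factorial : ℝ) := by
      rw [Nat.factorial_succ]; push_cast; ring
    have h8 : (z/2)^(2*k+1) = z^(2*k+1) / (2 * 4^k) := by
      rw [div_pow]
      congr 1
      rw [pow_succ, pow_mul]
      norm_num
      ring
    rw [h6, h7, h8]
    have h9 : (4:ℝ)^k ≠ 0 := by positivity
    have h10 : (4:ℝ)^(k+1) ≠ 0 := by positivity
    rw [pow_succ]
    field_simp
    ring
  have key2 : HasSum (fun k : ℕ => π * ((-1:ℝ)^k / ((k.factorial : ℝ) * ((k+1).factorial : ℝ))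
      * (z/2)^(2*k+1))) (∫ θ in (0:ℝ)..π, Real.sin (z * Real.sin θ) * Real.sin θ) := by
    rw [← funext hterm]
    exact key
  have key3 := key2.div_const π
  have hπ : (π:ℝ) ≠ 0 := Real.pi_ne_zero
  have hfun : (fun k : ℕ => π * ((-1:ℝ)^k / ((k.factorial : ℝ) * ((k+1).factorial : ℝ))
      * (z/2)^(2*k+1)) / π) = fun k : ℕ => ((-1:ℝ)^k / ((k.factorial : ℝ) * ((k+1).factorial : ℝ)))
      * (z/2)^(2*k+1) := by
    funext k; field_simp
  rw [hfun] at key3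
  rw [J1, key3.tsum_eq]
  ring

lemma abs_J1_le_one (z : ℝ) : |J1 z| ≤ 1 := by
  rw [J1_rep]
  have h := intervalIntegral.norm_integral_le_of_norm_le_const
    (C := 1) (f := fun θ => Real.sin (z * Real.sin θ) * Real.sin θ) (a := (0:ℝ)) (b := π)
    (fun θ _ => by
      rw [Real.norm_eq_abs, abs_mul]
      exact mul_le_one₀ (Real.abs_sin_le_one _) (abs_nonneg _) (Real.abs_sin_le_one _))
  rw [abs_mul, abs_div, abs_one]
  rw [Real.norm_eq_abs] at h
  calc 1 / |π| * |∫ θ in (0:ℝ)..π, Real.sin (z * Real.sin θ) * Real.sin θ|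
      ≤ 1 / |π| * (1 * |π - 0|) := by
        apply mul_le_mul_of_nonneg_left h (by positivity)
    _ = 1 := by
        rw [sub_zero, one_mul, one_div, inv_mul_cancel₀ (abs_ne_zero.2 Real.pi_ne_zero)]

lemma intervalIntegrable_inv_sqrt {t : ℝ} (ht : 0 ≤ t) :
    IntervalIntegrable (fun u : ℝ => 1 / Real.sqrt u) volume 0 t := by
  have h : IntervalIntegrable (fun u : ℝ => u ^ (-(1/2) : ℝ)) volume 0 t :=
    intervalIntegral.intervalIntegrable_rpow' (by norm_num)
  apply h.congr_ae
  rw [Filter.EventuallyEq, ae_restrict_iff' measurableSet_uIoc]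
  filter_upwards with u hu
  rw [Set.uIoc_of_le ht] at hu
  show u ^ (-(1/2):ℝ) = 1 / Real.sqrt u
  rw [Real.sqrt_eq_rpow, Real.rpow_neg hu.1.le]
  exact (one_div _).symm

lemma integral_inv_sqrt {t : ℝ} (ht : 0 ≤ t) :
    ∫ u in (0:ℝ)..t, 1 / Real.sqrt u = 2 * Real.sqrt t := by
  have h1 : ∫ u in (0:ℝ)..t, 1 / Real.sqrt u = ∫ u in (0:ℝ)..t, u ^ (-(1/2) : ℝ) := by
    apply intervalIntegral.integral_congr
    intro u hu
    rw [Set.uIcc_of_le ht] at hu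
    show 1 / Real.sqrt u = u ^ (-(1/2):ℝ)
    rw [Real.sqrt_eq_rpow, Real.rpow_neg hu.1]
    exact one_div _
  rw [h1, integral_rpow (Or.inl (by norm_num))]
  norm_num
  rw [← Real.sqrt_eq_rpow]
  ring


theorem stmt8 (D a ε β δ d : ℝ) (hD : 0 < D) (ha : 0 < a) (hε : 0 < ε) (hβ : 0 < β) (hδ : 0 < δ) (hd : 0 < d) :
    ∀ t : ℝ, 0 < t →
      (∫ x : ℝ, |H1 D a ε β x t|) ≤
        Real.exp (-a*t) + Real.sqrt ε * π * t * Real.exp (-(min a (β*ε))*t) := by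
  intro t ht
  set l := min a (β*ε) with hl
  have hl_a : l ≤ a := min_le_left _ _
  have hl_b : l ≤ β*ε := min_le_right _ _
  have hπD : 0 < π*D := mul_pos Real.pi_pos hD
  have hπDt : 0 < π*D*t := mul_pos hπD ht
  have hsπD : 0 < Real.sqrt (π*D) := Real.sqrt_pos.2 hπD
  have hsπDt : 0 < Real.sqrt (π*D*t) := Real.sqrt_pos.2 hπDt
  set A : ℝ → ℝ := fun x => Real.exp (-x^2/(4*D*t)) / (2*Real.sqrt (π*D*t)) * Real.exp (-a*t) with hA
  set C0 : ℝ := Real.sqrt ε * Real.exp (-l*t) / Real.sqrt (π*D) with hC0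
  set B : ℝ → ℝ := fun x => C0 * Real.sqrt t * Real.exp (-x^2/(4*D*t)) with hB
  have hC0pos : 0 < C0 := by
    rw [hC0]; positivity
  -- pointwise bound
  have hpt : ∀ x : ℝ, |H1 D a ε β x t| ≤ A x + B x := by
    intro x
    have hbound : ∀ y ∈ Set.uIoc (0:ℝ) t,
        ‖(Real.exp (-x^2/(4*D*y) - a*y) / Real.sqrt (t-y)) *
          (Real.sqrt ε * Real.exp (-β*ε*(t-y)) / Real.sqrt (π*D)) *
          J1 (2 * Real.sqrt (ε*y*(t-y)))‖ ≤
          (C0 * Real.exp (-x^2/(4*D*t))) * (1 / Real.sqrt (t-y)) := by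
      intro y hy
      rw [Set.uIoc_of_le ht.le] at hy
      obtain ⟨hy0, hyt⟩ := hy
      rcases eq_or_lt_of_le hyt with rfl | hyt'
      · simp [sub_self, Real.sqrt_zero, div_zero]
      · have hty : 0 < t - y := by linarith
        have hsty : 0 < Real.sqrt (t-y) := Real.sqrt_pos.2 hty
        have hkey : Real.exp (-x^2/(4*D*y) - a*y) * Real.exp (-β*ε*(t-y)) ≤
            Real.exp (-x^2/(4*D*t)) * Real.exp (-l*t) := by
          rw [← Real.exp_add, ← Real.exp_add]
          apply Real.exp_le_exp.2
          have h1 : x^2/(4*D*t) ≤ x^2/(4*D*y) := by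
            apply div_le_div_of_nonneg_left (sq_nonneg x) (by positivity) (by nlinarith)
          have h2 : l*t ≤ a*y + β*ε*(t-y) := by
            nlinarith [mul_le_mul_of_nonneg_right hl_a hy0.le,
              mul_le_mul_of_nonneg_right hl_b hty.le]
          have h1' : -x^2/(4*D*y) ≤ -x^2/(4*D*t) := by
            rw [neg_div, neg_div]
            exact neg_le_neg h1
          nlinarith [h1', h2]
        have hJ := abs_J1_le_one (2*Real.sqrt (ε*y*(t-y)))
        rw [Real.norm_eq_abs, abs_mul]
        have h2 : |Real.exp (-x^2/(4*D*y) - a*y) / Real.sqrt (t-y) *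
            (Real.sqrt ε * Real.exp (-β*ε*(t-y)) / Real.sqrt (π*D))| =
            Real.exp (-x^2/(4*D*y) - a*y) / Real.sqrt (t-y) *
            (Real.sqrt ε * Real.exp (-β*ε*(t-y)) / Real.sqrt (π*D)) :=
          abs_of_nonneg (by positivity)
        rw [h2]
        calc Real.exp (-x^2/(4*D*y) - a*y) / Real.sqrt (t-y) *
              (Real.sqrt ε * Real.exp (-β*ε*(t-y)) / Real.sqrt (π*D)) *
              |J1 (2 * Real.sqrt (ε*y*(t-y)))|
            ≤ Real.exp (-x^2/(4*D*y) - a*y) / Real.sqrt (t-y) *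
              (Real.sqrt ε * Real.exp (-β*ε*(t-y)) / Real.sqrt (π*D)) * 1 := by
              apply mul_le_mul_of_nonneg_left hJ (by positivity)
          _ = (Real.exp (-x^2/(4*D*y) - a*y) * Real.exp (-β*ε*(t-y))) * Real.sqrt ε /
              (Real.sqrt (t-y) * Real.sqrt (π*D)) := by ring
          _ ≤ (Real.exp (-x^2/(4*D*t)) * Real.exp (-l*t)) * Real.sqrt ε /
              (Real.sqrt (t-y) * Real.sqrt (π*D)) := by gcongr
          _ = (C0 * Real.exp (-x^2/(4*D*t))) * (1 / Real.sqrt (t-y)) := by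
              rw [hC0]; field_simp
    have hint1 : IntervalIntegrable
        (fun y => (C0 * Real.exp (-x^2/(4*D*t))) * (1 / Real.sqrt (t-y))) volume 0 t := by
      apply IntervalIntegrable.const_mul
      have h := ((intervalIntegrable_inv_sqrt ht.le).comp_sub_left t).symm
      simpa using h
    have hnorm := intervalIntegral.norm_integral_le_abs_of_norm_le
      (μ := volume) (a := (0:ℝ)) (b := t)
      (f := fun y => (Real.exp (-x^2/(4*D*y) - a*y) / Real.sqrt (t-y)) *
          (Real.sqrt ε * Real.exp (-β*ε*(t-y)) / Real.sqrt (π*D)) *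
          J1 (2 * Real.sqrt (ε*y*(t-y))))
      ((ae_restrict_iff' measurableSet_uIoc).2 (Filter.Eventually.of_forall hbound)) hint1
    have hval : ∫ y in (0:ℝ)..t, (C0 * Real.exp (-x^2/(4*D*t))) * (1/Real.sqrt (t-y)) =
        (C0 * Real.exp (-x^2/(4*D*t))) * (2*Real.sqrt t) := by
      rw [intervalIntegral.integral_const_mul]
      congr 1
      have h := intervalIntegral.integral_comp_sub_left
        (a := (0:ℝ)) (b := t) (fun u => 1/Real.sqrt u) t
      simp only [sub_zero, sub_self] at h
      rw [h, integral_inv_sqrt ht.le]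
    rw [hval] at hnorm
    have habs : |(C0 * Real.exp (-x^2/(4*D*t))) * (2*Real.sqrt t)| =
        (C0 * Real.exp (-x^2/(4*D*t))) * (2*Real.sqrt t) := abs_of_nonneg (by positivity)
    rw [habs, Real.norm_eq_abs] at hnorm
    have hH : H1 D a ε β x t = A x - (1/2) * ∫ y in (0:ℝ)..t,
        (Real.exp (-x^2/(4*D*y) - a*y) / Real.sqrt (t-y)) *
        (Real.sqrt ε * Real.exp (-β*ε*(t-y)) / Real.sqrt (π*D)) *
        J1 (2 * Real.sqrt (ε*y*(t-y))) := rfl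
    rw [hH]
    calc |A x - (1/2) * ∫ y in (0:ℝ)..t,
          (Real.exp (-x^2/(4*D*y) - a*y) / Real.sqrt (t-y)) *
          (Real.sqrt ε * Real.exp (-β*ε*(t-y)) / Real.sqrt (π*D)) *
          J1 (2 * Real.sqrt (ε*y*(t-y)))|
        ≤ |A x| + |(1/2) * ∫ y in (0:ℝ)..t,
          (Real.exp (-x^2/(4*D*y) - a*y) / Real.sqrt (t-y)) *
          (Real.sqrt ε * Real.exp (-β*ε*(t-y)) / Real.sqrt (π*D)) *
          J1 (2 * Real.sqrt (ε*y*(t-y)))| := abs_sub _ _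
      _ ≤ A x + B x := by
          apply add_le_add
          · exact le_of_eq (abs_of_nonneg (by rw [hA]; positivity))
          · rw [abs_mul]
            calc |(1:ℝ)/2| * |∫ y in (0:ℝ)..t,
                (Real.exp (-x^2/(4*D*y) - a*y) / Real.sqrt (t-y)) *
                (Real.sqrt ε * Real.exp (-β*ε*(t-y)) / Real.sqrt (π*D)) *
                J1 (2 * Real.sqrt (ε*y*(t-y)))|
                ≤ (1/2) * ((C0 * Real.exp (-x^2/(4*D*t))) * (2*Real.sqrt t)) := by
                  rw [abs_of_nonneg (by norm_num : (0:ℝ) ≤ 1/2)]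
                  exact mul_le_mul_of_nonneg_left hnorm (by norm_num)
              _ = B x := by rw [hB]; ring
  -- gaussian integrals
  have hgauss : ∀ b' : ℝ, 0 < b' → (Integrable fun x : ℝ => Real.exp (-x^2/b')) ∧
      (∫ x : ℝ, Real.exp (-x^2/b')) = Real.sqrt (π*b') := by
    intro b' hb'
    have h1 : (fun x : ℝ => Real.exp (-x^2/b')) = fun x => Real.exp (-(1/b') * x^2) := by
      funext x; ring_nf
    refine ⟨by rw [h1]; exact integrable_exp_neg_mul_sq (by positivity), ?_⟩
    rw [h1, integral_gaussian]
    congr 1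
    field_simp
  have hEint := (hgauss (4*D*t) (by positivity)).1
  have hEval := (hgauss (4*D*t) (by positivity)).2
  have hsqrt4 : Real.sqrt (π*(4*D*t)) = 2 * Real.sqrt (π*D*t) := by
    rw [show π*(4*D*t) = 2^2*(π*D*t) by ring, Real.sqrt_mul (by positivity),
      Real.sqrt_sq (by norm_num)]
  have hAeq : A = fun x => Real.exp (-x^2/(4*D*t)) * (Real.exp (-a*t) / (2*Real.sqrt (π*D*t))) := by
    funext x; rw [hA]; ring
  have hAint : Integrable A := by rw [hAeq]; exact hEint.mul_const _
  have hAval : (∫ x : ℝ, A x) = Real.exp (-a*t) := by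
    rw [hAeq]
    rw [integral_mul_const, hEval, hsqrt4]
    field_simp
  have hBint : Integrable B := by
    rw [hB]; exact hEint.const_mul _
  have hBval : (∫ x : ℝ, B x) = 2*t*(Real.sqrt ε * Real.exp (-l*t)) := by
    rw [hB, integral_const_mul, hEval, hsqrt4, hC0]
    rw [show π*D*t = (π*D)*t from rfl, Real.sqrt_mul hπD.le,
      show (2:ℝ) * (Real.sqrt (π*D) * Real.sqrt t) = 2 * Real.sqrt (π*D) * Real.sqrt t by ring]
    rw [show Real.sqrt ε * Real.exp (-l*t) / Real.sqrt (π*D) * Real.sqrt t *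
        (2 * Real.sqrt (π*D) * Real.sqrt t) =
        2 * (Real.sqrt t * Real.sqrt t) * (Real.sqrt ε * Real.exp (-l*t)) *
        (Real.sqrt (π*D) / Real.sqrt (π*D)) by ring,
      div_self hsπD.ne', Real.mul_self_sqrt ht.le]
    ring
  have hmono := integral_mono_of_nonneg
    (Filter.Eventually.of_forall (fun x => abs_nonneg (H1 D a ε β x t)))
    (hAint.add hBint) (Filter.Eventually.of_forall hpt)
  calc (∫ x : ℝ, |H1 D a ε β x t|) ≤ ∫ x : ℝ, (A x + B x) := hmono
    _ = (∫ x : ℝ, A x) + ∫ x : ℝ, B x := integral_add hAint hBint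
    _ = Real.exp (-a*t) + 2*t*(Real.sqrt ε * Real.exp (-l*t)) := by rw [hAval, hBval]
    _ ≤ Real.exp (-a*t) + Real.sqrt ε * π * t * Real.exp (-l*t) := by
        have h2 : 2*t*(Real.sqrt ε * Real.exp (-l*t)) ≤ π*t*(Real.sqrt ε * Real.exp (-l*t)) := by
          apply mul_le_mul_of_nonneg_right _ (by positivity)
          exact mul_le_mul_of_nonneg_right Real.two_le_pi ht.le
        linarith [h2]
    _ = Real.exp (-a*t) + Real.sqrt ε * π * t * Real.exp (-(min a (β*ε))*t) := by rw [← hl]
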